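/- For every block B = B(a_1,…,a_t), the number of 0-1 words of the same length with the same value as B equals p + q, i.e. f(B) = p + q, where p/q = [a_1,…,a_t] in lowest terms. -/

import Mathlib

/-- The golden ratio λ = (1+√5)/2. -/
noncomputable def gold : ℝ := (1 + Real.sqrt 5) / 2

/-- The value Σ_{j=1}^ℓ w_j λ^{-j} of a 0-1 word `(w_1, …, w_ℓ)`. -/
noncomputable def wordVal : List Bool → ℝ
  | [] => 0
  | b :: t => ((if b then 1 else 0) + wordVal t) / gold

/-- `wordF w` is the number of 0-1 words of the same length as `w` having the same
value as `w`. -/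
noncomputable def wordF (w : List Bool) : ℕ :=
  Nat.card {v : List Bool // v.length = w.length ∧ wordVal v = wordVal w}

/-- The block `B(a_1, …, a_t)`: the 0-1 word `1(00)^{a_1}(01)^{a_2}⋯(00)^{a_t}` if `t`
is odd and `1(01)^{a_1}(00)^{a_2}⋯(00)^{a_t}` if `t` is even (`1 = true`, `0 = false`);
the `i`-th group is `(00)^{a_i}` when `i ≡ t (mod 2)` and `(01)^{a_i}` otherwise. -/
def blockWord (a : List ℕ) : List Bool :=
  true :: (((List.range a.length).map fun i =>
    (List.replicate (a.getD i 0)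
      (if (a.length - 1 - i) % 2 = 0 then [false, false] else [false, true])).flatten).flatten)

/-- The finite continued fraction `[a_1, …, a_t] = 1/(a_1 + 1/(a_2 + ⋯ + 1/a_t))`. -/
def cf : List ℕ → ℚ
  | [] => 0
  | a :: t => 1 / ((a : ℚ) + cf t)

/-- `p + q` where `p/q = [a_1, …, a_t]` in lowest terms. -/
def pqSum (a : List ℕ) : ℕ := (cf a).num.toNat + (cf a).den

lemma gld_facts : gold ^ 2 = gold + 1 ∧ 1 < gold ∧ gold < 2 := by
  have h5 : Real.sqrt 5 ^ 2 = 5 := Real.sq_sqrt (by norm_num)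
  have h0 : 0 ≤ Real.sqrt 5 := Real.sqrt_nonneg 5
  have h1 : 1 < Real.sqrt 5 := by nlinarith
  have h2 : Real.sqrt 5 < 3 := by nlinarith
  refine ⟨?_, ?_, ?_⟩ <;> unfold gold <;> nlinarith

lemma gld_sq : gold ^ 2 = gold + 1 := gld_facts.1
lemma gld_one_lt : 1 < gold := gld_facts.2.1
lemma gld_lt_two : gold < 2 := gld_facts.2.2
lemma gld_pos : 0 < gold := lt_trans one_pos gld_one_lt
lemma gld_ne : gold ≠ 0 := ne_of_gt gld_pos

lemma wordVal_nonneg : ∀ w : List Bool, 0 ≤ wordVal w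
  | [] => le_refl 0
  | b :: t => by
    rw [wordVal]
    have h1 := wordVal_nonneg t
    have h2 : (0:ℝ) ≤ (if b then 1 else 0) + wordVal t := by
      have : (0:ℝ) ≤ (if b then 1 else 0) := by split <;> norm_num
      linarith
    exact div_nonneg h2 (le_of_lt gld_pos)

lemma wordVal_lt_gold : ∀ w : List Bool, wordVal w < gold
  | [] => gld_pos
  | b :: t => by
    rw [wordVal, div_lt_iff₀ gld_pos]
    have h1 := wordVal_lt_gold t
    have h2 : (if b then (1:ℝ) else 0) ≤ 1 := by split <;> norm_num
    nlinarith [gld_sq]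

/-- number of 0-1 words of length ℓ with value V -/
noncomputable def cnt (ℓ : ℕ) (V : ℝ) : ℕ :=
  Nat.card {v : List Bool // v.length = ℓ ∧ wordVal v = V}

instance cntFinite (ℓ : ℕ) (V : ℝ) :
    Finite {v : List Bool // v.length = ℓ ∧ wordVal v = V} := by
  have h : {v : List Bool | v.length = ℓ ∧ wordVal v = V}.Finite :=
    (List.finite_length_eq Bool ℓ).subset fun v hv => hv.1
  exact h.to_subtype

lemma cnt_neg {ℓ : ℕ} {V : ℝ} (h : V < 0) : cnt ℓ V = 0 := by
  rw [cnt, Nat.card_eq_zero]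
  left
  constructor
  rintro ⟨v, -, hv⟩
  exact absurd (hv ▸ wordVal_nonneg v) (not_le.2 h)

lemma cnt_big {ℓ : ℕ} {V : ℝ} (h : gold ≤ V) : cnt ℓ V = 0 := by
  rw [cnt, Nat.card_eq_zero]
  left
  constructor
  rintro ⟨v, -, hv⟩
  exact absurd (hv ▸ wordVal_lt_gold v) (not_lt.2 h)

lemma cnt_nil (V : ℝ) : cnt 0 V = if V = 0 then 1 else 0 := by
  split
  · next h =>
    subst h
    have : Nonempty {v : List Bool // v.length = 0 ∧ wordVal v = 0} :=
      ⟨⟨[], rfl, rfl⟩⟩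
    have : Subsingleton {v : List Bool // v.length = 0 ∧ wordVal v = 0} := by
      constructor
      rintro ⟨v, hv, -⟩ ⟨w, hw, -⟩
      simp [List.length_eq_zero_iff.1 hv, List.length_eq_zero_iff.1 hw]
    exact Nat.card_unique
  · next h =>
    rw [cnt, Nat.card_eq_zero]
    left
    constructor
    rintro ⟨v, hv, hv2⟩
    rw [List.length_eq_zero_iff.1 hv] at hv2
    exact h (hv2 ▸ rfl)

lemma val_tail {b : Bool} {t : List Bool} {V : ℝ} (h : wordVal (b :: t) = V) :
    wordVal t = gold * V - (if b then 1 else 0) := by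
  rw [wordVal, div_eq_iff gld_ne] at h
  linarith [h]

lemma val_cons {b : Bool} {t : List Bool} {V : ℝ}
    (h : wordVal t = gold * V - (if b then 1 else 0)) : wordVal (b :: t) = V := by
  rw [wordVal, h, div_eq_iff gld_ne]
  ring

def peelEquiv (ℓ : ℕ) (V : ℝ) :
    {v : List Bool // v.length = ℓ + 1 ∧ wordVal v = V} ≃
      ({v : List Bool // v.length = ℓ ∧ wordVal v = gold * V - 1} ⊕
       {v : List Bool // v.length = ℓ ∧ wordVal v = gold * V}) where
    toFun := fun x =>
      match x with
      | ⟨[], h⟩ => absurd h.1 (by simp)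
      | ⟨true :: t, h⟩ => Sum.inl ⟨t, by
          refine ⟨Nat.succ_injective h.1, ?_⟩
          have := val_tail h.2
          simpa using this⟩
      | ⟨false :: t, h⟩ => Sum.inr ⟨t, by
          refine ⟨Nat.succ_injective h.1, ?_⟩
          have := val_tail h.2
          simpa using this⟩
    invFun := fun x =>
      match x with
      | Sum.inl ⟨t, h⟩ => ⟨true :: t, by
          refine ⟨by simp [h.1], val_cons (by simpa using h.2)⟩⟩
      | Sum.inr ⟨t, h⟩ => ⟨false :: t, by
          refine ⟨by simp [h.1], val_cons (by simpa using h.2)⟩⟩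
    left_inv := by
      rintro ⟨(_ | ⟨b, t⟩), h⟩
      · exact absurd h.1 (by simp)
      · cases b <;> rfl
    right_inv := by
      rintro (⟨t, h⟩ | ⟨t, h⟩) <;> rfl

lemma cnt_succ (ℓ : ℕ) (V : ℝ) :
    cnt (ℓ + 1) V = cnt ℓ (gold * V - 1) + cnt ℓ (gold * V) := by
  rw [cnt, Nat.card_congr (peelEquiv ℓ V), Nat.card_sum]
  rfl

lemma cnt_succ2 (ℓ : ℕ) (V : ℝ) :
    cnt (ℓ + 2) V = cnt ℓ (gold ^ 2 * V - gold - 1) + cnt ℓ (gold ^ 2 * V - gold)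
      + cnt ℓ (gold ^ 2 * V - 1) + cnt ℓ (gold ^ 2 * V) := by
  have e1 : gold * (gold * V - 1) - 1 = gold ^ 2 * V - gold - 1 := by ring
  have e2 : gold * (gold * V - 1) = gold ^ 2 * V - gold := by ring
  have e3 : gold * (gold * V) - 1 = gold ^ 2 * V - 1 := by ring
  have e4 : gold * (gold * V) = gold ^ 2 * V := by ring
  rw [show ℓ + 2 = ℓ + 1 + 1 from rfl, cnt_succ, cnt_succ, cnt_succ, e1, e2, e3, e4]
  omega

/-- count at the value of w itself -/
noncomputable def Pc (w : List Bool) : ℕ := cnt w.length (wordVal w)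
/-- count at the value of w plus one -/
noncomputable def Qc (w : List Bool) : ℕ := cnt w.length (wordVal w + 1)

lemma val_false (v : List Bool) : wordVal (false :: v) = wordVal v / gold := by
  rw [wordVal]; norm_num

lemma val_true (v : List Bool) : wordVal (true :: v) = (1 + wordVal v) / gold := by
  rw [wordVal]; norm_num

lemma val_false_lt_one (v : List Bool) : wordVal (false :: v) < 1 := by
  rw [val_false]
  exact (div_lt_one gld_pos).2 (wordVal_lt_gold v)

lemma gld_inv : 1 / gold = gold - 1 := by
  rw [div_eq_iff gld_ne]
  nlinarith [gld_sq]

lemma val_false_lt (v : List Bool) (h : wordVal v < 1) :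
    wordVal (false :: v) < gold - 1 := by
  rw [val_false, ← gld_inv]
  exact (div_lt_div_iff_of_pos_right gld_pos).2 h

lemma val_ft_lt (v : List Bool) (h : wordVal v < gold - 1) :
    wordVal (false :: true :: v) < gold - 1 := by
  apply val_false_lt
  rw [val_true]
  apply (div_lt_one gld_pos).2
  linarith

lemma val_ff_lt (v : List Bool) : wordVal (false :: false :: v) < gold - 1 :=
  val_false_lt _ (val_false_lt_one v)

lemma step00 (u : List Bool) (hu : wordVal u < 1) :
    Pc (false :: false :: u) = Pc u ∧ Qc (false :: false :: u) = Pc u + Qc u := by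
  have hx0 := wordVal_nonneg u
  have hxg := wordVal_lt_gold u
  have hg1 := gld_one_lt
  have hg2 := gld_lt_two
  have hW : gold ^ 2 * wordVal (false :: false :: u) = wordVal u := by
    rw [val_false, val_false]
    field_simp
  have hlen : (false :: false :: u).length = u.length + 2 := by simp
  constructor
  · rw [Pc, hlen, cnt_succ2, hW]
    rw [cnt_neg (by linarith : wordVal u - gold - 1 < 0),
        cnt_neg (by linarith : wordVal u - gold < 0),
        cnt_neg (by linarith : wordVal u - 1 < 0)]
    simp [Pc]
  · rw [Qc, hlen, cnt_succ2]
    have h1 : gold ^ 2 * (wordVal (false :: false :: u) + 1) = wordVal u + gold + 1 := by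
      rw [mul_add, hW, gld_sq]; ring
    rw [h1, show wordVal u + gold + 1 - gold - 1 = wordVal u by ring,
        show wordVal u + gold + 1 - gold = wordVal u + 1 by ring,
        cnt_big (by linarith : gold ≤ wordVal u + gold + 1 - 1),
        cnt_big (by linarith : gold ≤ wordVal u + gold + 1)]
    simp [Pc, Qc]

lemma step01 (u : List Bool) (hu : wordVal u < gold - 1) :
    Pc (false :: true :: u) = Pc u + Qc u ∧ Qc (false :: true :: u) = Qc u := by
  have hx0 := wordVal_nonneg u
  have hxg := wordVal_lt_gold u
  have hg1 := gld_one_lt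
  have hg2 := gld_lt_two
  have hW : gold ^ 2 * wordVal (false :: true :: u) = 1 + wordVal u := by
    rw [val_false, val_true]
    field_simp
  have hlen : (false :: true :: u).length = u.length + 2 := by simp
  constructor
  · rw [Pc, hlen, cnt_succ2, hW]
    rw [show 1 + wordVal u - gold - 1 = wordVal u - gold by ring,
        show 1 + wordVal u - 1 = wordVal u by ring,
        cnt_neg (by linarith : wordVal u - gold < 0),
        cnt_neg (by linarith : 1 + wordVal u - gold < 0),
        show 1 + wordVal u = wordVal u + 1 by ring]
    simp [Pc, Qc]
  · rw [Qc, hlen, cnt_succ2]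
    have h1 : gold ^ 2 * (wordVal (false :: true :: u) + 1) = wordVal u + gold + 2 := by
      rw [mul_add, hW, gld_sq]; ring
    rw [h1, show wordVal u + gold + 2 - gold - 1 = wordVal u + 1 by ring,
        cnt_big (by linarith : gold ≤ wordVal u + gold + 2 - gold),
        cnt_big (by linarith : gold ≤ wordVal u + gold + 2 - 1),
        cnt_big (by linarith : gold ≤ wordVal u + gold + 2)]
    simp [Qc]

lemma iter00 : ∀ (k : ℕ) (u : List Bool), wordVal u < 1 →
    wordVal ((List.replicate k [false, false]).flatten ++ u) < 1 ∧
    Pc ((List.replicate k [false, false]).flatten ++ u) = Pc u ∧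
    Qc ((List.replicate k [false, false]).flatten ++ u) = k * Pc u + Qc u := by
  intro k
  induction k with
  | zero => intro u hu; simpa using hu
  | succ k ih =>
    intro u hu
    obtain ⟨hb, hP, hQ⟩ := ih u hu
    have hrw : (List.replicate (k + 1) [false, false]).flatten ++ u
        = false :: false :: ((List.replicate k [false, false]).flatten ++ u) := by
      simp [List.replicate_succ]
    rw [hrw]
    obtain ⟨sP, sQ⟩ := step00 _ hb
    refine ⟨?_, ?_, ?_⟩
    · have := val_ff_lt ((List.replicate k [false, false]).flatten ++ u)
      linarith [gld_lt_two]
    · rw [sP, hP]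
    · rw [sQ, hP, hQ]; ring

lemma iter01 : ∀ (k : ℕ) (u : List Bool), wordVal u < gold - 1 →
    wordVal ((List.replicate k [false, true]).flatten ++ u) < gold - 1 ∧
    Pc ((List.replicate k [false, true]).flatten ++ u) = Pc u + k * Qc u ∧
    Qc ((List.replicate k [false, true]).flatten ++ u) = Qc u := by
  intro k
  induction k with
  | zero => intro u hu; simpa using hu
  | succ k ih =>
    intro u hu
    obtain ⟨hb, hP, hQ⟩ := ih u hu
    have hrw : (List.replicate (k + 1) [false, true]).flatten ++ u
        = false :: true :: ((List.replicate k [false, true]).flatten ++ u) := by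
      simp [List.replicate_succ]
    rw [hrw]
    obtain ⟨sP, sQ⟩ := step01 _ hb
    refine ⟨val_ft_lt _ hb, ?_, ?_⟩
    · rw [sP, hP, hQ]; ring
    · rw [sQ, hQ]

/-- the body of a block (the block without its leading 1) -/
def bodyW (a : List ℕ) : List Bool :=
  ((List.range a.length).map fun i =>
    (List.replicate (a.getD i 0)
      (if (a.length - 1 - i) % 2 = 0 then [false, false] else [false, true])).flatten).flatten

lemma bodyW_cons (h : ℕ) (t : List ℕ) :
    bodyW (h :: t) =
      (List.replicate h (if t.length % 2 = 0 then [false, false] else [false, true])).flatten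
        ++ bodyW t := by
  unfold bodyW
  rw [List.length_cons, List.range_succ_eq_map, List.map_cons, List.flatten_cons, List.map_map]
  have e1 : ((h :: t).getD 0 0) = h := rfl
  have e2 : (t.length + 1 - 1 - 0) % 2 = t.length % 2 := by omega
  rw [e1, e2]
  congr 2
  apply List.map_congr_left
  intro i hi
  simp only [Function.comp_apply, List.getD_cons_succ]
  have e : t.length + 1 - 1 - (i + 1) = t.length - 1 - i := by omega
  rw [e]


lemma bodyW_nil : bodyW [] = [] := rfl

lemma bodyW_false (a : List ℕ) (hpos : ∀ x ∈ a, 0 < x) :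
    bodyW a = [] ∨ ∃ r, bodyW a = false :: r := by
  rcases a with _ | ⟨h, t⟩
  · left; rfl
  · right
    rw [bodyW_cons]
    have hh : 0 < h := hpos h (by simp)
    obtain ⟨m, rfl⟩ := Nat.exists_eq_succ_of_ne_zero hh.ne'
    split <;> rw [List.replicate_succ, List.flatten_cons] <;> exact ⟨_, rfl⟩

lemma val_bodyW_lt_one (a : List ℕ) (hpos : ∀ x ∈ a, 0 < x) :
    wordVal (bodyW a) < 1 := by
  rcases bodyW_false a hpos with h | ⟨r, h⟩ <;> rw [h]
  · show (0:ℝ) < 1; norm_num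
  · exact val_false_lt_one r

lemma val_bodyW_lt (a : List ℕ) (hpos : ∀ x ∈ a, 0 < x) (hodd : a.length % 2 = 1) :
    wordVal (bodyW a) < gold - 1 := by
  rcases a with _ | ⟨h, t⟩
  · simp at hodd
  · rw [bodyW_cons]
    have ht : t.length % 2 = 0 := by simp at hodd; omega
    rw [if_pos ht]
    have hh : 0 < h := hpos h (by simp)
    obtain ⟨m, rfl⟩ := Nat.exists_eq_succ_of_ne_zero hh.ne'
    simp only [List.replicate_succ, List.flatten_cons, List.cons_append, List.nil_append]
    exact val_ff_lt _

/-- the continuant-style recursion -/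
def XY : List ℕ → ℕ × ℕ
  | [] => (1, 0)
  | h :: t =>
    if t.length % 2 = 0 then ((XY t).1, (XY t).2 + h * (XY t).1)
    else ((XY t).1 + h * (XY t).2, (XY t).2)

lemma main_ind (a : List ℕ) (hpos : ∀ x ∈ a, 0 < x) :
    Pc (bodyW a) = (XY a).1 ∧ Qc (bodyW a) = (XY a).2 := by
  induction a with
  | nil =>
    constructor
    · show cnt 0 (wordVal []) = 1
      rw [show wordVal [] = 0 from rfl, cnt_nil]
      norm_num
    · show cnt 0 (wordVal [] + 1) = 0
      rw [show wordVal [] = 0 from rfl, cnt_nil]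
      norm_num
  | cons h t ih =>
    have hpt : ∀ x ∈ t, 0 < x := fun x hx => hpos x (by simp [hx])
    obtain ⟨ihP, ihQ⟩ := ih hpt
    rw [bodyW_cons, XY]
    rcases Nat.even_or_odd t.length with he | ho
    · have ht : t.length % 2 = 0 := Nat.even_iff.1 he
      rw [if_pos ht, if_pos ht]
      obtain ⟨-, hP, hQ⟩ := iter00 h (bodyW t) (val_bodyW_lt_one t hpt)
      exact ⟨by rw [hP, ihP], by rw [hQ, ihP, ihQ]; ring⟩
    · have ht : t.length % 2 = 1 := Nat.odd_iff.1 ho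
      rw [if_neg (by omega), if_neg (by omega)]
      obtain ⟨-, hP, hQ⟩ := iter01 h (bodyW t) (val_bodyW_lt t hpt ht)
      exact ⟨by rw [hP, ihP, ihQ], by rw [hQ, ihQ]⟩

lemma cf_spec (a : List ℕ) (hpos : ∀ x ∈ a, 0 < x) :
    (cf a).num = (if a.length % 2 = 0 then ((XY a).2 : ℤ) else ((XY a).1 : ℤ)) ∧
    (cf a).den = (if a.length % 2 = 0 then (XY a).1 else (XY a).2) := by
  induction a with
  | nil => simp [cf, XY]
  | cons h t ih =>
    have hpt : ∀ x ∈ t, 0 < x := fun x hx => hpos x (by simp [hx])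
    have hh : 0 < h := hpos h (by simp)
    obtain ⟨hn, hd⟩ := ih hpt
    have hred := (cf t).reduced
    have hlen : (h :: t).length = t.length + 1 := rfl
    rcases Nat.even_or_odd t.length with he | ho
    · -- t.length even
      have ht : t.length % 2 = 0 := Nat.even_iff.1 he
      rw [if_pos ht] at hn hd
      set A := (XY t).1 with hA
      set B := (XY t).2 with hB
      have hApos : 0 < A := hd ▸ (cf t).pos
      have hcop : Nat.Coprime A (B + h * A) := by
        have h1 : Nat.Coprime B A := by
          have := hred
          rw [hn, hd] at this
          simpa using this
        have e : B + h * A = B + A * h := by ring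
        rw [e]
        exact (Nat.coprime_add_mul_left_right A B h).2 h1.symm
      have hcf : cf (h :: t) = ((A : ℤ) : ℚ) / (((B + h * A : ℕ) : ℤ) : ℚ) := by
        rw [cf, ← Rat.num_div_den (cf t), hn, hd]
        have hA0 : ((A : ℚ)) ≠ 0 := by positivity
        have e : ((h : ℚ)) + ((B : ℤ) : ℚ) / ((A : ℕ) : ℚ)
            = (((B + h * A : ℕ) : ℤ) : ℚ) / ((A : ℤ) : ℚ) := by
          push_cast
          field_simp
          ring
        rw [e, one_div_div]
      have hpos' : (0 : ℤ) < ((B + h * A : ℕ) : ℤ) := by positivity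
      have hcop' : ((A : ℤ)).natAbs.Coprime (((B + h * A : ℕ) : ℤ)).natAbs := by
        rw [Int.natAbs_natCast, Int.natAbs_natCast]
        exact hcop
      have hnum := Rat.num_div_eq_of_coprime hpos' hcop'
      have hden := Rat.den_div_eq_of_coprime hpos' hcop'
      rw [hcf]
      have hoddlen : (h :: t).length % 2 = 1 := by rw [hlen]; omega
      rw [if_neg (by omega), if_neg (by omega)]
      constructor
      · rw [hnum]
        show (A : ℤ) = ((XY (h :: t)).1 : ℤ)
        rw [XY, if_pos ht]
      · have : (((A : ℤ) : ℚ) / (((B + h * A : ℕ) : ℤ) : ℚ)).den = (B + h * A : ℕ) := by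
          exact_mod_cast hden
        rw [this]
        show (B + h * A : ℕ) = (XY (h :: t)).2
        rw [XY, if_pos ht]
    · -- t.length odd
      have ht : t.length % 2 = 1 := Nat.odd_iff.1 ho
      rw [if_neg (by omega)] at hn hd
      set A := (XY t).1 with hA
      set B := (XY t).2 with hB
      have hBpos : 0 < B := hd ▸ (cf t).pos
      have hcop : Nat.Coprime B (A + h * B) := by
        have h1 : Nat.Coprime A B := by
          have := hred
          rw [hn, hd] at this
          simpa using this
        have e : A + h * B = A + B * h := by ring
        rw [e]
        exact (Nat.coprime_add_mul_left_right B A h).2 h1.symm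
      have hcf : cf (h :: t) = ((B : ℤ) : ℚ) / (((A + h * B : ℕ) : ℤ) : ℚ) := by
        rw [cf, ← Rat.num_div_den (cf t), hn, hd]
        have hB0 : ((B : ℚ)) ≠ 0 := by positivity
        have e : ((h : ℚ)) + ((A : ℤ) : ℚ) / ((B : ℕ) : ℚ)
            = (((A + h * B : ℕ) : ℤ) : ℚ) / ((B : ℤ) : ℚ) := by
          push_cast
          field_simp
          ring
        rw [e, one_div_div]
      have hpos' : (0 : ℤ) < ((A + h * B : ℕ) : ℤ) := by positivity
      have hcop' : ((B : ℤ)).natAbs.Coprime (((A + h * B : ℕ) : ℤ)).natAbs := by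
        rw [Int.natAbs_natCast, Int.natAbs_natCast]
        exact hcop
      have hnum := Rat.num_div_eq_of_coprime hpos' hcop'
      have hden := Rat.den_div_eq_of_coprime hpos' hcop'
      rw [hcf]
      rw [if_pos (by omega : (h :: t).length % 2 = 0), if_pos (by omega : (h :: t).length % 2 = 0)]
      constructor
      · rw [hnum]
        show (B : ℤ) = ((XY (h :: t)).2 : ℤ)
        rw [XY, if_neg (by omega)]
      · have : (((B : ℤ) : ℚ) / (((A + h * B : ℕ) : ℤ) : ℚ)).den = (A + h * B : ℕ) := by
          exact_mod_cast hden
        rw [this]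
        show (A + h * B : ℕ) = (XY (h :: t)).1
        rw [XY, if_neg (by omega)]


lemma blockWord_eq (a : List ℕ) : blockWord a = true :: bodyW a := rfl

/-- The cardinality of a block: `f(B(a_1,…,a_t)) = p + q` where `p/q = [a_1,…,a_t]`
in lowest terms. -/
theorem wordF_blockWord (a : List ℕ) (ha : a ≠ []) (hpos : ∀ x ∈ a, 0 < x) :
    wordF (blockWord a) = pqSum a := by
  have h1 : wordF (blockWord a) = cnt ((bodyW a).length + 1) (wordVal (true :: bodyW a)) := rfl
  rw [h1, cnt_succ]
  have hv2 : gold * wordVal (true :: bodyW a) = wordVal (bodyW a) + 1 := by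
    rw [val_true, mul_div_assoc', mul_comm, mul_div_assoc, div_self gld_ne]
    ring
  have hv1 : gold * wordVal (true :: bodyW a) - 1 = wordVal (bodyW a) := by
    rw [hv2]
    ring
  rw [hv1, hv2]
  obtain ⟨hP, hQ⟩ := main_ind a hpos
  show Pc (bodyW a) + Qc (bodyW a) = pqSum a
  rw [hP, hQ, pqSum]
  obtain ⟨hn, hd⟩ := cf_spec a hpos
  rcases Nat.even_or_odd a.length with he | ho
  · have h0 : a.length % 2 = 0 := Nat.even_iff.1 he
    rw [if_pos h0] at hn hd
    rw [hn, hd, Int.toNat_natCast]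
    omega
  · have h0 : a.length % 2 = 1 := Nat.odd_iff.1 ho
    rw [if_neg (by omega)] at hn hd
    rw [hn, hd, Int.toNat_natCast]
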